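/- arXiv:0712.0574 — 3 statements merged into one kernel-verified Lean document; each statement's English description precedes it below -/
import Mathlib

section
/- Let H ∈ (0,1). For all real x ≥ 0, one has 1 + Σ_{n=1}^∞ x^{⌊n/H⌋}/(⌊n/H⌋)! ≤ e^x ≤ (e/H)·(1 + Σ_{n=1}^∞ x^{⌊n/H⌋}/((⌊(n-1)/H⌋+1)!)). -/
/-! Since `n ↦ ⌊n/H⌋` increases strictly from `0`, the left-hand series is a subseries of the
exponential series. For the right-hand side, split `∑_{k ≥ 1} x^k/k!` into the blocks
`⌊(n-1)/H⌋ < k ≤ ⌊n/H⌋`, each of at most `1 + 1/H ≤ e/H` terms; for `x ≥ 1` every term of the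
`n`-th block is at most `x^⌊n/H⌋ / (⌊(n-1)/H⌋+1)!`, while for `x < 1` simply `e^x ≤ e ≤ e/H`. -/

open Real Finset
open scoped Nat

lemma Nat.floor_add_one_le_floor_add {x c : ℝ} (hx : 0 ≤ x) (hc : 1 ≤ c) :
    ⌊x⌋₊ + 1 ≤ ⌊x + c⌋₊ := by
  rw [← Nat.floor_add_one hx]
  exact Nat.floor_le_floor (by linarith)

lemma Nat.floor_add_sub_floor_lt {x c : ℝ} (hxc : 0 ≤ x + c) :
    (⌊x + c⌋₊ : ℝ) - ⌊x⌋₊ < c + 1 := by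
  linarith [Nat.floor_le hxc, Nat.lt_floor_add_one x]

lemma strictMono_floor_div {H : ℝ} (hH0 : 0 < H) (hH1 : H ≤ 1) :
    StrictMono fun n : ℕ => ⌊(n : ℝ) / H⌋₊ := by
  refine strictMono_nat_of_lt_succ fun n => Nat.lt_of_succ_le ?_
  have h := Nat.floor_add_one_le_floor_add (c := 1 / H) (by positivity : 0 ≤ (n : ℝ) / H)
    (one_le_one_div hH0 hH1)
  rwa [Nat.cast_succ, add_div]

lemma floor_succ_div_sub_floor_div_lt {H : ℝ} (hH0 : 0 < H) (n : ℕ) :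
    (⌊((n + 1 : ℕ) : ℝ) / H⌋₊ : ℝ) - ⌊(n : ℝ) / H⌋₊ < 1 / H + 1 := by
  have h := Nat.floor_add_sub_floor_lt (x := (n : ℝ) / H) (c := 1 / H) (by positivity)
  rwa [Nat.cast_succ, add_div]

lemma sum_range_eq_sum_sum_Ico_of_monotone {M : Type*} [AddCommMonoid M] (f : ℕ → M) {b : ℕ → ℕ}
    (hb : Monotone b) (hb0 : b 0 = 0) (N : ℕ) :
    ∑ k ∈ range (b N), f k = ∑ n ∈ range N, ∑ k ∈ Ico (b n) (b (n + 1)), f k := by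
  induction N with
  | zero => simp [hb0]
  | succ N ih =>
    rw [sum_range_succ, ← ih, sum_range_add_sum_Ico _ (hb N.le_succ)]

lemma tsum_le_mul_tsum_of_blocks {a c : ℕ → ℝ} {b : ℕ → ℕ} {L : ℝ} (hb : StrictMono b)
    (hb0 : b 0 = 0) (hgap : ∀ n, (b (n + 1) : ℝ) - b n ≤ L) (ha : ∀ k, 0 ≤ a k)
    (hc : Summable c) (hac : ∀ n, ∀ k ∈ Ico (b n) (b (n + 1)), a k ≤ c n) :
    ∑' k, a k ≤ L * ∑' n, c n := by
  have hc0 : ∀ n, 0 ≤ c n := fun n =>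
    (ha _).trans (hac n (b n) (left_mem_Ico.mpr (hb n.lt_succ_self)))
  have hL : 0 ≤ L := by
    have : (b 0 : ℝ) < b 1 := by exact_mod_cast hb zero_lt_one
    linarith [hgap 0]
  have hblock : ∀ n, ∑ k ∈ Ico (b n) (b (n + 1)), a k ≤ L * c n := fun n =>
    calc ∑ k ∈ Ico (b n) (b (n + 1)), a k ≤ #(Ico (b n) (b (n + 1))) • c n :=
          sum_le_card_nsmul _ _ _ (hac n)
      _ = ((b (n + 1) : ℝ) - b n) * c n := by
          rw [Nat.card_Ico, nsmul_eq_mul, Nat.cast_sub (hb n.lt_succ_self).le]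
      _ ≤ L * c n := mul_le_mul_of_nonneg_right (hgap n) (hc0 n)
  refine Real.tsum_le_of_sum_range_le ha fun N => ?_
  calc ∑ k ∈ range N, a k ≤ ∑ k ∈ range (b N), a k :=
        sum_le_sum_of_subset_of_nonneg (range_subset_range.mpr (hb.id_le N)) fun k _ _ => ha k
    _ = ∑ n ∈ range N, ∑ k ∈ Ico (b n) (b (n + 1)), a k :=
        sum_range_eq_sum_sum_Ico_of_monotone a hb.monotone hb0 N
    _ ≤ ∑ n ∈ range N, L * c n := sum_le_sum fun n _ => hblock n
    _ ≤ L * ∑' n, c n := by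
        rw [← mul_sum]
        exact mul_le_mul_of_nonneg_left (hc.sum_le_tsum _ fun n _ => hc0 n) hL

lemma Real.exp_eq_tsum_pow_div_factorial (x : ℝ) : exp x = ∑' k : ℕ, x ^ k / k ! := by
  rw [exp_eq_exp_ℝ, NormedSpace.exp_eq_tsum_div]

lemma Real.exp_eq_one_add_tsum_pow_succ_div_factorial (x : ℝ) :
    exp x = 1 + ∑' k : ℕ, x ^ (k + 1) / (k + 1) ! := by
  rw [exp_eq_tsum_pow_div_factorial, (summable_pow_div_factorial x).tsum_eq_zero_add]
  simp

lemma one_add_tsum_pow_div_factorial_comp_le_exp {b : ℕ → ℕ} (hb : StrictMono b) (hb0 : b 0 = 0)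
    {x : ℝ} (hx : 0 ≤ x) : 1 + ∑' n, x ^ b (n + 1) / (b (n + 1)) ! ≤ exp x := by
  have hsum : Summable fun n => x ^ b n / (b n) ! :=
    (summable_pow_div_factorial x).comp_injective hb.injective
  calc 1 + ∑' n, x ^ b (n + 1) / (b (n + 1)) ! = ∑' n, x ^ b n / (b n) ! := by
        rw [hsum.tsum_eq_zero_add, hb0]; simp
    _ ≤ exp x := by
        rw [exp_eq_tsum_pow_div_factorial]
        exact tsum_comp_le_tsum_of_inj (summable_pow_div_factorial x) (fun k => by positivity)
          hb.injective

lemma summable_pow_comp_succ_div_factorial_succ {b : ℕ → ℕ} (hb : StrictMono b) {L : ℝ}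
    (hgap : ∀ n, (b (n + 1) : ℝ) - b n ≤ L) {x : ℝ} (hx : 1 ≤ x) :
    Summable fun n => x ^ b (n + 1) / (b n + 1) ! := by
  have hle : ∀ n, b (n + 1) ≤ b n + 1 + ⌈L⌉₊ := fun n => by
    have : (b (n + 1) : ℝ) ≤ b n + 1 + ⌈L⌉₊ := by linarith [hgap n, Nat.le_ceil L]
    exact_mod_cast this
  have hsum : Summable fun n => x ^ ⌈L⌉₊ * (x ^ (b n + 1) / (b n + 1) !) :=
    ((summable_pow_div_factorial x).comp_injective
      (add_left_injective 1 |>.comp hb.injective)).mul_left _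
  refine hsum.of_nonneg_of_le (fun n => by positivity) fun n => ?_
  rw [← mul_div_assoc, ← pow_add, add_comm ⌈L⌉₊]
  exact div_le_div_of_nonneg_right (pow_le_pow_right₀ hx (hle n)) (by positivity)

lemma exp_le_mul_one_add_tsum_pow_div_factorial {b : ℕ → ℕ} (hb : StrictMono b) (hb0 : b 0 = 0)
    {L : ℝ} (heL : exp 1 ≤ L) (hgap : ∀ n, (b (n + 1) : ℝ) - b n ≤ L) {x : ℝ} (hx : 0 ≤ x) :
    exp x ≤ L * (1 + ∑' n, x ^ b (n + 1) / (b n + 1) !) := by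
  have hS : 0 ≤ ∑' n, x ^ b (n + 1) / (b n + 1) ! := tsum_nonneg fun n => by positivity
  rcases lt_or_ge x 1 with hx1 | hx1
  · calc exp x ≤ exp 1 := exp_le_exp.mpr hx1.le
      _ ≤ L := heL
      _ ≤ L * (1 + ∑' n, x ^ b (n + 1) / (b n + 1) !) :=
          le_mul_of_one_le_right (by linarith [add_one_le_exp 1]) (by linarith)
  have hblocks : ∑' k : ℕ, x ^ (k + 1) / (k + 1) ! ≤ L * ∑' n, x ^ b (n + 1) / (b n + 1) ! := by
    refine tsum_le_mul_tsum_of_blocks hb hb0 hgap (fun k => by positivity)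
      (summable_pow_comp_succ_div_factorial_succ hb hgap hx1) fun n k hk => ?_
    rw [mem_Ico] at hk
    exact div_le_div₀ (by positivity) (pow_le_pow_right₀ hx1 hk.2)
      (by positivity) (by exact_mod_cast Nat.factorial_le (by omega))
  have hL : 1 ≤ L := by linarith [add_one_le_exp 1]
  rw [exp_eq_one_add_tsum_pow_succ_div_factorial, mul_one_add]
  linarith

theorem stmt_0 (H : ℝ) (hH : H ∈ Set.Ioo (0:ℝ) 1) (x : ℝ) (hx : 0 ≤ x) :
    1 + ∑' n : ℕ, x ^ (⌊((n:ℝ) + 1) / H⌋₊) / (Nat.factorial ⌊((n:ℝ) + 1) / H⌋₊ : ℝ)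
      ≤ Real.exp x ∧
    Real.exp x ≤ (Real.exp 1 / H) *
      (1 + ∑' n : ℕ, x ^ (⌊((n:ℝ) + 1) / H⌋₊) / (Nat.factorial (⌊(n:ℝ) / H⌋₊ + 1) : ℝ)) := by
  obtain ⟨hH0, hH1⟩ := hH
  have hb := strictMono_floor_div hH0 hH1.le
  have hb0 : ⌊((0 : ℕ) : ℝ) / H⌋₊ = 0 := by simp
  have hgap (n : ℕ) : (⌊((n + 1 : ℕ) : ℝ) / H⌋₊ : ℝ) - ⌊(n : ℝ) / H⌋₊ ≤ exp 1 / H := by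
    have h2e : 2 ≤ exp 1 := by linarith [add_one_le_exp 1]
    have : 1 / H + 1 ≤ exp 1 / H := by
      rw [div_add_one hH0.ne']; gcongr; linarith
    linarith [floor_succ_div_sub_floor_div_lt hH0 n]
  have heL : exp 1 ≤ exp 1 / H := le_div_self (exp_pos 1).le hH0 hH1.le
  have lower := one_add_tsum_pow_div_factorial_comp_le_exp hb hb0 hx
  have upper := exp_le_mul_one_add_tsum_pow_div_factorial hb hb0 heL hgap hx
  push_cast at lower upper
  exact ⟨lower, upper⟩
end

section
/- Let α ∈ (1,2], H ∈ (0,1) with 2H < α, and let (cₙ) be a sequence of positive reals satisfying cₙ = E[L^{2Hn}]/n! where L ≥ 0 satisfies E[Lⁿ] = A₁ⁿ·n!/Γ(1 + n(1−1/α)) for all integers n ≥ 1 (interpolated by Jensen's inequality for non-integer powers). Then with ρ₁ = α/(α−2H), lim_{n→∞} (n/(ρ₁e))·cₙ^{ρ₁/n} = (1/ρ₁)·(A₁·(2H)^{1/α}/(1−1/α)^{1−1/α})^{2Hρ₁}. -/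
/-! With `β = 1 - 1/α`, the moment formula and Stirling's formula for `Γ` give
`log E[L^k] / k = (1 - β) log k + log A₁ + β - 1 - β log β + o(1)` along the integers.
By Lyapunov's inequality `p ↦ (E[L^p])^(1/p)` is nondecreasing, so squeezing `γ` between
`⌊γ⌋` and `⌈γ⌉` extends this asymptotic to real `γ → ∞`. At `γ = 2Hn`, subtracting
`log n! = n log n - n + o(n)` shows that `log cₙ / n + (log n) / ρ₁` converges, and exponentiating
gives the limit. -/

open MeasureTheory Real Filter Topology Asymptotics
open scoped Nat

lemma isLittleO_log_factorial_sub :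
    (fun n : ℕ => log n ! - (n * log n - n)) =o[atTop] (fun n : ℕ => (n : ℝ)) := by
  have hcast : Tendsto (fun n : ℕ => (n : ℝ)) atTop atTop := tendsto_natCast_atTop_atTop
  have hseq : (fun n : ℕ => log (Stirling.stirlingSeq n)) =o[atTop] (fun n : ℕ => (n : ℝ)) :=
    (Stirling.tendsto_stirlingSeq_sqrt_pi.log (by positivity)).isBigO_one ℝ |>.trans_isLittleO
      (isLittleO_one_left_iff ℝ |>.2 <| tendsto_norm_atTop_atTop.comp hcast)
  have hlog : (fun n : ℕ => log (2 * n)) =o[atTop] (fun n : ℕ => (n : ℝ)) :=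
    (isLittleO_log_id_atTop.comp_tendsto (hcast.const_mul_atTop two_pos)).trans_isBigO
      (isBigO_const_mul_self 2 _ _)
  refine (hseq.add (hlog.const_mul_left (1 / 2))).congr' ?_ EventuallyEq.rfl
  filter_upwards [eventually_ne_atTop 0] with n hn
  rw [Stirling.log_stirlingSeq_formula, log_div (by positivity) (exp_pos 1).ne', log_exp]
  ring

lemma tendsto_log_factorial_div_sub_log :
    Tendsto (fun n : ℕ => log n ! / n - log n) atTop (𝓝 (-1)) := by
  have h := isLittleO_log_factorial_sub.tendsto_div_nhds_zero.sub_const 1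
  rw [zero_sub] at h
  refine h.congr' ?_
  filter_upwards [eventually_ne_atTop 0] with n hn
  field_simp
  ring

lemma abs_log_Gamma_one_add_sub_log_factorial_floor_le {x : ℝ} (hx : 1 ≤ x) :
    |log (Gamma (1 + x)) - log ⌊x⌋₊ !| ≤ log (x + 1) := by
  set m := ⌊x⌋₊
  have hm : (m : ℝ) ≤ x := Nat.floor_le (by linarith)
  have hm' : x < m + 1 := Nat.lt_floor_add_one x
  have hm1 : (1 : ℝ) ≤ m := by exact_mod_cast Nat.one_le_floor_iff x |>.2 hx
  have hlow : (m ! : ℝ) ≤ Gamma (1 + x) := by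
    rw [← Gamma_nat_eq_factorial, add_comm]
    exact Gamma_strictMonoOn_Ici.monotoneOn (by simp; linarith) (by simp; linarith) (by linarith)
  have hup : Gamma (1 + x) ≤ (m + 1) * (m ! : ℝ) := by
    rw [← Gamma_nat_eq_factorial, ← Gamma_add_one (by positivity)]
    exact Gamma_strictMonoOn_Ici.monotoneOn (by simp; linarith) (by simp; linarith) (by linarith)
  have hpos : (0 : ℝ) < m ! := by positivity
  have h1 := log_le_log hpos hlow
  have h2 := log_le_log (hpos.trans_le hlow) hup
  rw [log_mul (by positivity) hpos.ne'] at h2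
  have h3 : log (m + 1) ≤ log (x + 1) := log_le_log (by positivity) (by linarith)
  rw [abs_le]; constructor <;> linarith

lemma abs_mul_log_sub_self_sub_le {x y : ℝ} (hy : 1 ≤ y) (hyx : y ≤ x) (hxy : x ≤ y + 1) :
    |(x * log x - x) - (y * log y - y)| ≤ log x + 1 := by
  have hy0 : 0 < y := by linarith
  have hlogxy : log x - log y ≤ x / y - 1 := by
    rw [← log_div (by linarith) hy0.ne']
    exact log_le_sub_one_of_pos (div_pos (by linarith) hy0)
  have hmono : log y ≤ log x := log_le_log hy0 hyx
  have hlogx : 0 ≤ log x := log_nonneg (hy.trans hyx)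
  have hconcave : y * (log x - log y) ≤ x - y := by
    calc y * (log x - log y) ≤ y * (x / y - 1) := mul_le_mul_of_nonneg_left hlogxy hy0.le
      _ = x - y := by field_simp
  rw [abs_le]; constructor <;> nlinarith

lemma isLittleO_log_Gamma_one_add_sub :
    (fun x : ℝ => log (Gamma (1 + x)) - (x * log x - x)) =o[atTop] id := by
  set h := fun x : ℝ => log (Gamma (1 + x)) - (x * log x - x)
  have hfloor : (fun x : ℝ => h ⌊x⌋₊) =o[atTop] id := by
    refine ((isLittleO_log_factorial_sub.comp_tendsto tendsto_nat_floor_atTop).congr_left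
      fun x => ?_).trans_isBigO ?_
    · simp only [h, Function.comp_apply, add_comm (1 : ℝ), Gamma_nat_eq_factorial]
    · refine IsBigO.of_bound' ?_
      filter_upwards [eventually_ge_atTop 0] with x hx
      simpa [abs_of_nonneg hx] using Nat.floor_le hx
  have herr : (fun x : ℝ => 2 * log (x + 1) + 1) =o[atTop] id := by
    refine IsLittleO.add (IsLittleO.const_mul_left ?_ 2) (isLittleO_const_id_atTop 1)
    refine (isLittleO_log_id_atTop.comp_tendsto (tendsto_atTop_add_const_right _ 1 tendsto_id))
      |>.trans_isBigO (IsBigO.of_bound 2 ?_)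
    filter_upwards [eventually_ge_atTop 1] with x hx
    simp only [Function.comp_apply, id, norm_of_nonneg (by linarith : 0 ≤ x + 1),
      norm_of_nonneg (by linarith : 0 ≤ x)]
    linarith
  refine (hfloor.add (IsBigO.trans_isLittleO (IsBigO.of_bound' ?_) herr)).congr_left
    fun x => add_sub_cancel _ _
  filter_upwards [eventually_ge_atTop 1] with x hx
  have hm1 : (1 : ℝ) ≤ ⌊x⌋₊ := by exact_mod_cast Nat.one_le_floor_iff x |>.2 hx
  have hΓ := abs_log_Gamma_one_add_sub_log_factorial_floor_le hx
  have hs := abs_mul_log_sub_self_sub_le hm1 (Nat.floor_le (by linarith))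
    (Nat.lt_floor_add_one x).le
  have hlog : log x ≤ log (x + 1) := log_le_log (by linarith) (by linarith)
  have hlog0 : 0 ≤ log (x + 1) := log_nonneg (by linarith)
  simp only [h, add_comm (1 : ℝ) (⌊x⌋₊ : ℝ), Gamma_nat_eq_factorial, norm_eq_abs]
  rw [abs_of_nonneg (by positivity : 0 ≤ 2 * log (x + 1) + 1)]
  calc _ = |(log (Gamma (1 + x)) - log ⌊x⌋₊ !)
          - ((x * log x - x) - (⌊x⌋₊ * log ⌊x⌋₊ - ⌊x⌋₊))| := by ring_nf
    _ ≤ _ := (abs_sub _ _).trans (by linarith)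

lemma tendsto_log_Gamma_sub_log_Gamma_mul_div_sub {β : ℝ} (hβ : 0 < β) :
    Tendsto (fun x => (log (Gamma (1 + x)) - log (Gamma (1 + β * x))) / x - (1 - β) * log x)
      atTop (𝓝 (β - 1 - β * log β)) := by
  have ho := isLittleO_log_Gamma_one_add_sub
  have hβx : (fun x : ℝ => log (Gamma (1 + β * x)) - (β * x * log (β * x) - β * x))
      =o[atTop] id :=
    (ho.comp_tendsto (tendsto_id.const_mul_atTop hβ)).trans_isBigO
      (isBigO_const_mul_self β id atTop)
  have hlim := (ho.tendsto_div_nhds_zero.sub hβx.tendsto_div_nhds_zero).add_const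
    (β - 1 - β * log β)
  rw [sub_zero, zero_add] at hlim
  refine hlim.congr' ?_
  filter_upwards [eventually_gt_atTop 0] with x hx
  simp only [id, log_mul hβ.ne' hx.ne']
  field_simp
  ring

lemma tendsto_sub_mul_log_of_floor_le_of_le_ceil {f g : ℝ → ℝ} {a C : ℝ}
    (hf : Tendsto (fun x => f x - a * log x) atTop (𝓝 C))
    (hg : ∀ᶠ x in atTop, f ⌊x⌋₊ ≤ g x ∧ g x ≤ f ⌈x⌉₊) :
    Tendsto (fun x => g x - a * log x) atTop (𝓝 C) := by
  have hcast {r : ℝ → ℕ} (hr : Tendsto r atTop atTop)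
      (hratio : Tendsto (fun x => (r x : ℝ) / x) atTop (𝓝 1)) :
      Tendsto (fun x => f (r x) - a * log x) atTop (𝓝 C) := by
    have h := (hf.comp (tendsto_natCast_atTop_atTop.comp hr)).add
      ((hratio.log one_ne_zero).const_mul a)
    rw [log_one, mul_zero, add_zero] at h
    refine h.congr' ?_
    filter_upwards [eventually_gt_atTop 0, hr.eventually_gt_atTop 0] with x hx hrx
    simp only [Function.comp_apply, log_div (Nat.cast_pos.2 hrx).ne' hx.ne']
    ring
  exact tendsto_of_tendsto_of_tendsto_of_le_of_le'
    (hcast tendsto_nat_floor_atTop tendsto_nat_floor_div_atTop)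
    (hcast tendsto_nat_ceil_atTop tendsto_nat_ceil_div_atTop)
    (hg.mono fun x hx => by linarith [hx.1]) (hg.mono fun x hx => by linarith [hx.2])

section MomentAsymptotics

variable {Ω : Type*} [MeasurableSpace Ω] {μ : Measure Ω} [IsProbabilityMeasure μ] {f : Ω → ℝ}
  {p q : ℝ}

lemma rpow_integral_rpow_le_integral_rpow (hf : 0 ≤ᵐ[μ] f) (hp : 0 < p) (hpq : p ≤ q)
    (hfp : Integrable (fun ω => f ω ^ p) μ) (hfq : Integrable (fun ω => f ω ^ q) μ) :
    (∫ ω, f ω ^ p ∂μ) ^ (q / p) ≤ ∫ ω, f ω ^ q ∂μ := by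
  have hpow : (fun ω => (f ω ^ p) ^ (q / p)) =ᵐ[μ] fun ω => f ω ^ q := by
    filter_upwards [hf] with ω hω
    rw [← rpow_mul hω, mul_div_cancel₀ _ hp.ne']
  have hqp : 1 ≤ q / p := (one_le_div hp).2 hpq
  calc (∫ ω, f ω ^ p ∂μ) ^ (q / p) ≤ ∫ ω, (f ω ^ p) ^ (q / p) ∂μ :=
        (convexOn_rpow hqp).map_integral_le (continuous_rpow_const (by linarith)).continuousOn
          isClosed_Ici (hf.mono fun ω hω => rpow_nonneg hω p) hfp (hfq.congr hpow.symm)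
    _ = ∫ ω, f ω ^ q ∂μ := integral_congr_ae hpow

lemma integral_rpow_pos_of_le (hf : 0 ≤ᵐ[μ] f) (hp : 0 < p) (hpq : p ≤ q)
    (hfp : Integrable (fun ω => f ω ^ p) μ) (hfq : Integrable (fun ω => f ω ^ q) μ)
    (hpos : 0 < ∫ ω, f ω ^ p ∂μ) : 0 < ∫ ω, f ω ^ q ∂μ :=
  (rpow_pos_of_pos hpos _).trans_le (rpow_integral_rpow_le_integral_rpow hf hp hpq hfp hfq)

lemma log_integral_rpow_div_le (hf : 0 ≤ᵐ[μ] f) (hp : 0 < p) (hpq : p ≤ q)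
    (hfp : Integrable (fun ω => f ω ^ p) μ) (hfq : Integrable (fun ω => f ω ^ q) μ)
    (hpos : 0 < ∫ ω, f ω ^ p ∂μ) :
    log (∫ ω, f ω ^ p ∂μ) / p ≤ log (∫ ω, f ω ^ q ∂μ) / q := by
  have h := log_le_log (by positivity) (rpow_integral_rpow_le_integral_rpow hf hp hpq hfp hfq)
  rw [log_rpow hpos] at h
  rw [div_le_div_iff₀ hp (hp.trans_le hpq)]
  calc log (∫ ω, f ω ^ p ∂μ) * q = q / p * log (∫ ω, f ω ^ p ∂μ) * p := by field_simp
    _ ≤ _ := mul_le_mul_of_nonneg_right h hp.le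

variable {L : Ω → ℝ} {A β : ℝ}

lemma integral_rpow_pos_of_one_le (hA : 0 < A) (hβ : 0 < β) (hL : 0 ≤ᵐ[μ] L)
    (hint : ∀ γ : ℝ, 0 < γ → Integrable (fun ω => L ω ^ γ) μ)
    (hmom : ∀ n : ℕ, 1 ≤ n → ∫ ω, L ω ^ n ∂μ = A ^ n * n ! / Gamma (1 + n * β))
    {γ : ℝ} (hγ : 1 ≤ γ) : 0 < ∫ ω, L ω ^ γ ∂μ := by
  refine integral_rpow_pos_of_le hL one_pos hγ (hint 1 one_pos) (hint γ (by linarith)) ?_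
  have h := hmom 1 le_rfl
  simp only [pow_one, Nat.cast_one, Nat.factorial_one, mul_one] at h
  simp only [rpow_one, h]
  exact div_pos hA (Gamma_pos_of_pos (by linarith))

theorem tendsto_log_integral_rpow_div_sub_mul_log (hA : 0 < A) (hβ : 0 < β) (hL : 0 ≤ᵐ[μ] L)
    (hint : ∀ γ : ℝ, 0 < γ → Integrable (fun ω => L ω ^ γ) μ)
    (hmom : ∀ n : ℕ, 1 ≤ n → ∫ ω, L ω ^ n ∂μ = A ^ n * n ! / Gamma (1 + n * β)) :
    Tendsto (fun γ => log (∫ ω, L ω ^ γ ∂μ) / γ - (1 - β) * log γ) atTop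
      (𝓝 (log A + (β - 1 - β * log β))) := by
  set Λ : ℝ → ℝ := fun x => log A + (log (Gamma (1 + x)) - log (Gamma (1 + β * x))) / x
  have hΛ : Tendsto (fun x => Λ x - (1 - β) * log x) atTop (𝓝 (log A + (β - 1 - β * log β))) :=
    ((tendsto_log_Gamma_sub_log_Gamma_mul_div_sub hβ).const_add (log A)).congr fun x => by ring
  have hpos (γ : ℝ) (hγ : 1 ≤ γ) : 0 < ∫ ω, L ω ^ γ ∂μ :=
    integral_rpow_pos_of_one_le hA hβ hL hint hmom hγ
  have hnat (n : ℕ) (hn : 1 ≤ n) : log (∫ ω, L ω ^ (n : ℝ) ∂μ) / n = Λ n := by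
    have hn0 : (0 : ℝ) < n := by exact_mod_cast hn
    have hΓ : 0 < Gamma (1 + n * β) := Gamma_pos_of_pos (by positivity)
    simp only [rpow_natCast, hmom n hn, Λ]
    rw [log_div (by positivity) hΓ.ne', log_mul (by positivity) (by positivity), log_pow,
      add_comm (1 : ℝ) n, Gamma_nat_eq_factorial, mul_comm β]
    field_simp
    ring
  refine tendsto_sub_mul_log_of_floor_le_of_le_ceil hΛ ?_
  filter_upwards [eventually_ge_atTop 1] with γ hγ
  have hfloor : 1 ≤ ⌊γ⌋₊ := Nat.one_le_floor_iff γ |>.2 hγ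
  have hceil : 1 ≤ ⌈γ⌉₊ := hfloor.trans (Nat.floor_le_ceil γ)
  have hfloor1 : (1 : ℝ) ≤ ⌊γ⌋₊ := by exact_mod_cast hfloor
  rw [← hnat _ hfloor, ← hnat _ hceil]
  exact ⟨log_integral_rpow_div_le hL (by linarith) (Nat.floor_le (by linarith))
      (hint _ (by linarith)) (hint γ (by linarith)) (hpos _ hfloor1),
    log_integral_rpow_div_le hL (by linarith) (Nat.le_ceil γ) (hint γ (by linarith))
      (hint _ (by exact_mod_cast hceil)) (hpos γ hγ)⟩

end MomentAsymptotics

lemma tendsto_sub_log_factorial_div_add_mul_log {F : ℝ → ℝ} {a C h : ℝ} (hh : 0 < h)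
    (hF : Tendsto (fun γ => F γ / γ - a * log γ) atTop (𝓝 C)) :
    Tendsto (fun n : ℕ => (F (h * n) - log n !) / n + (1 - h * a) * log n) atTop
      (𝓝 (h * C + h * a * log h + 1)) := by
  have hlim := (((hF.comp (tendsto_natCast_atTop_atTop.const_mul_atTop hh)).const_mul h).add_const
    (h * a * log h)).sub tendsto_log_factorial_div_sub_log
  rw [sub_neg_eq_add] at hlim
  refine hlim.congr' ?_
  filter_upwards [eventually_gt_atTop 0] with n hn
  have hn0 : (0 : ℝ) < n := by exact_mod_cast hn
  simp only [Function.comp_apply, log_mul hh.ne' hn0.ne']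
  field_simp
  ring

lemma tendsto_div_mul_rpow_of_tendsto_log {c : ℕ → ℝ} {ρ K : ℝ} (hρ : 0 < ρ)
    (hc : ∀ᶠ n in atTop, 0 < c n)
    (h : Tendsto (fun n : ℕ => log (c n) / n + log n / ρ) atTop (𝓝 K)) :
    Tendsto (fun n : ℕ => n / (ρ * exp 1) * c n ^ (ρ / n)) atTop (𝓝 (exp (ρ * K - 1) / ρ)) := by
  refine ((((h.const_mul ρ).sub_const 1).rexp).div_const ρ).congr' ?_
  filter_upwards [hc, eventually_gt_atTop 0] with n hcn hn
  have hn0 : (0 : ℝ) < n := by exact_mod_cast hn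
  rw [rpow_def_of_pos hcn, mul_add, mul_div_cancel₀ _ hρ.ne', add_sub_assoc, exp_add, exp_sub,
    exp_log hn0]
  field_simp

theorem stmt_10_general {Ω : Type*} [MeasurableSpace Ω] (μ : Measure Ω) [IsProbabilityMeasure μ]
    (α H A₁ : ℝ) (hα : α ∈ Set.Ioc (1:ℝ) 2) (hH : H ∈ Set.Ioo (0:ℝ) 1)
    (h2H : 2 * H < α) (hA₁ : 0 < A₁)
    (L : Ω → ℝ) (hLpos : ∀ ω, 0 ≤ L ω)
    (hmom : ∀ n : ℕ, 1 ≤ n →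
      ∫ ω, L ω ^ n ∂μ = A₁ ^ n * (Nat.factorial n : ℝ) / Real.Gamma (1 + n * (1 - 1/α)))
    (hintL : ∀ γ : ℝ, 0 < γ → Integrable (fun ω => L ω ^ γ) μ)
    (c : ℕ → ℝ)
    (hc : ∀ n : ℕ, c n = (∫ ω, L ω ^ (2 * H * n) ∂μ) / (Nat.factorial n : ℝ)) :
    Tendsto
      (fun n : ℕ => (n : ℝ) / ((α / (α - 2 * H)) * Real.exp 1)
          * c n ^ ((α / (α - 2 * H)) / (n : ℝ)))
      atTop
      (nhds ((α - 2 * H) / α *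
        (A₁ * (2 * H) ^ (1/α) / (1 - 1/α) ^ (1 - 1/α)) ^ (2 * H * (α / (α - 2 * H))))) := by
  have hα0 : α ≠ 0 := by linarith [hα.1]
  have hα2H : α - 2 * H ≠ 0 := by linarith
  have hH0 : 0 < 2 * H := by linarith [hH.1]
  have hβ : 0 < 1 - 1 / α := by rw [sub_pos, div_lt_one (by linarith [hα.1])]; exact hα.1
  have hL : 0 ≤ᵐ[μ] L := ae_of_all μ hLpos
  have hM := tendsto_sub_log_factorial_div_add_mul_log hH0
    (tendsto_log_integral_rpow_div_sub_mul_log hA₁ hβ hL hintL hmom)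
  have hMpos : ∀ᶠ n : ℕ in atTop, 0 < ∫ ω, L ω ^ (2 * H * n) ∂μ :=
    (tendsto_natCast_atTop_atTop.const_mul_atTop hH0).eventually_ge_atTop 1 |>.mono fun n hn =>
      integral_rpow_pos_of_one_le hA₁ hβ hL hintL hmom hn
  have hcpos : ∀ᶠ n : ℕ in atTop, 0 < c n := hMpos.mono fun n hn => by rw [hc]; positivity
  have hlogc : Tendsto (fun n : ℕ => log (c n) / n + log n / (α / (α - 2 * H))) atTop _ :=
    hM.congr' <| hMpos.mono fun n hn => by
      dsimp only
      rw [hc, log_div hn.ne' (by positivity)]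
      field_simp
      ring
  convert tendsto_div_mul_rpow_of_tendsto_log (div_pos (by linarith [hα.1]) (by linarith)) hcpos
    hlogc using 2
  -- the exponents agree because `ρ₁ (1 - 2H/α) = 1`
  rw [rpow_def_of_pos (by positivity), log_div (by positivity) (by positivity),
    log_mul hA₁.ne' (by positivity), log_rpow hH0, log_rpow hβ, mul_comm,
    div_eq_mul_inv _ (α / (α - 2 * H)), inv_div]
  congr 2
  field_simp
  ring

theorem stmt_10 {Ω : Type*} [MeasurableSpace Ω] (μ : Measure Ω) [IsProbabilityMeasure μ]
    (α H A₁ : ℝ) (hα : α ∈ Set.Ioc (1:ℝ) 2) (hH : H ∈ Set.Ioo (0:ℝ) 1)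
    (h2H : 2 * H < α) (hA₁ : 0 < A₁)
    (L : Ω → ℝ) (hLmeas : Measurable L) (hLpos : ∀ ω, 0 ≤ L ω)
    (hmom : ∀ n : ℕ, 1 ≤ n →
      ∫ ω, L ω ^ n ∂μ = A₁ ^ n * (Nat.factorial n : ℝ) / Real.Gamma (1 + n * (1 - 1/α)))
    (hintL : ∀ γ : ℝ, 0 < γ → Integrable (fun ω => L ω ^ γ) μ)
    (c : ℕ → ℝ)
    (hc : ∀ n : ℕ, c n = (∫ ω, L ω ^ (2 * H * n) ∂μ) / (Nat.factorial n : ℝ)) :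
    Tendsto
      (fun n : ℕ => (n : ℝ) / ((α / (α - 2 * H)) * Real.exp 1)
          * c n ^ ((α / (α - 2 * H)) / (n : ℝ)))
      atTop
      (nhds ((α - 2 * H) / α *
        (A₁ * (2 * H) ^ (1/α) / (1 - 1/α) ^ (1 - 1/α)) ^ (2 * H * (α / (α - 2 * H))))) :=
  stmt_10_general μ α H A₁ hα hH h2H hA₁ L hLpos hmom hintL c hc
end

section
/- Let (Xₜ)_{t≥0} be a stochastic process with continuous paths, σ(h) = h^{H(α−1)/α} and suppose there exist constants A₇, A₈ > 0 such that for all 0 ≤ a < b and x > 0, P(max_{a≤t≤b}|X(t) − X(a)| > x) ≤ A₇ exp(−A₈ x^{2α/(α+2H)}/(b−a)^{2H(α−1)/(α+2H)}). Then almost surely limsup_{t→∞} max_{0≤s≤t}|X(s)| / (t^{H(α−1)/α}(log log t)^{(α+2H)/(2α)}) ≤ A₈^{−(α+2H)/(2α)}. -/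
/-!
Along the geometric times `Tₙ = ρⁿ`, the tail bound at the level
`x = c Tₙ₊₁^β (log log Tₙ)^θ` (with `β = H(α-1)/α`, `θ = (α+2H)/(2α)`) equals
`A₇ (n log ρ)^(-A₈ c^{1/θ})`, which is summable as soon as `c > A₈^(-θ)`. By Borel–Cantelli the
running maximum eventually stays below these levels, and since it is monotone, for
`Tₙ ≤ t ≤ Tₙ₊₁` this gives `max_{[0,t]} |X| ≤ c ρ^β t^β (log log t)^θ`. Letting `c ↓ A₈^(-θ)` and
`ρ ↓ 1` along a countable family gives the claim.
-/

open MeasureTheory Real Filter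

lemma bddAbove_range_abs_Icc {f : ℝ → ℝ} {a b : ℝ} (hf : ContinuousOn f (Set.Icc a b)) :
    BddAbove (Set.range fun s : Set.Icc a b => |f s|) := by
  simpa only [Set.image_eq_range] using isCompact_Icc.bddAbove_image hf.abs

lemma monotoneOn_iSup_abs_Icc {f : ℝ → ℝ} {a : ℝ} (hf : ContinuousOn f (Set.Ici a)) :
    MonotoneOn (fun t => ⨆ s : Set.Icc a t, |f s|) (Set.Ici a) := by
  intro b hb c _ hbc
  have : Nonempty (Set.Icc a b) := ⟨⟨a, Set.left_mem_Icc.2 hb⟩⟩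
  exact ciSup_le fun s => le_ciSup (bddAbove_range_abs_Icc (hf.mono Set.Icc_subset_Ici_self))
    ⟨s, Set.Icc_subset_Icc_right hbc s.2⟩

lemma rpow_mul_log_log_rpow_pos {β θ t : ℝ} (ht : exp 1 < t) :
    0 < t ^ β * log (log t) ^ θ := by
  have hlog : 1 < log t := by rwa [lt_log_iff_exp_lt (exp_pos 1 |>.trans ht)]
  have := log_pos hlog
  have := (exp_pos 1).trans ht
  positivity

lemma monotoneOn_rpow_mul_log_log_rpow {β θ : ℝ} (hβ : 0 ≤ β) (hθ : 0 ≤ θ) :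
    MonotoneOn (fun t => t ^ β * log (log t) ^ θ) (Set.Ici (exp 1)) := by
  intro s hs t _ hst
  have hs0 : 0 < s := (exp_pos 1).trans_le hs
  have hlog : 1 ≤ log s := by rwa [le_log_iff_exp_le hs0]
  have hloglog : 0 ≤ log (log s) := log_nonneg hlog
  have hlog_le : log s ≤ log t := log_le_log hs0 hst
  exact mul_le_mul (rpow_le_rpow hs0.le hst hβ)
    (rpow_le_rpow hloglog (log_le_log (one_pos.trans_le hlog) hlog_le) hθ)
    (by positivity) (rpow_nonneg (hs0.le.trans hst) β)

theorem limsup_div_le_of_le_geometric {M φ : ℝ → ℝ} {ρ K a : ℝ} (hρ : 1 < ρ)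
    (hM : MonotoneOn M (Set.Ici 0)) (hM0 : ∀ t, 0 ≤ M t)
    (hφ : MonotoneOn φ (Set.Ici a)) (hφ0 : ∀ t, a < t → 0 < φ t)
    (h : ∀ᶠ n : ℕ in atTop, M (ρ ^ (n + 1)) ≤ K * φ (ρ ^ n)) :
    limsup (fun t => M t / φ t) atTop ≤ K := by
  obtain ⟨N, hN⟩ := eventually_atTop.1
    (h.and ((tendsto_pow_atTop_atTop_of_one_lt hρ).eventually_gt_atTop a))
  have hK : 0 ≤ K := nonneg_of_mul_nonneg_left ((hM0 _).trans (hN N le_rfl).1)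
    (hφ0 _ (hN N le_rfl).2)
  have hfreq : ∃ᶠ t in atTop, 0 ≤ M t / φ t :=
    ((eventually_gt_atTop a).mono fun t ht => div_nonneg (hM0 t) (hφ0 t ht).le).frequently
  refine limsup_le_of_le (IsCoboundedUnder.of_frequently_ge hfreq) ?_
  filter_upwards [eventually_ge_atTop (ρ ^ N), eventually_ge_atTop 1] with t htN ht1
  obtain ⟨n, hnt, htn⟩ := exists_nat_pow_near ht1 hρ
  have hNn : N ≤ n := by
    by_contra! hn
    exact htn.not_ge (htN.trans' (pow_le_pow_right₀ hρ.le hn))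
  obtain ⟨hbound, han⟩ := hN n hNn
  have hρ0 : (0 : ℝ) ≤ ρ ^ n := by positivity
  rw [div_le_iff₀ (hφ0 t (han.trans_le hnt))]
  calc M t ≤ M (ρ ^ (n + 1)) := hM (hρ0.trans hnt) (hρ0.trans (hnt.trans htn.le)) htn.le
    _ ≤ K * φ (ρ ^ n) := hbound
    _ ≤ K * φ t := mul_le_mul_of_nonneg_left (hφ han.le (han.le.trans hnt) hnt) hK

section AlmostSure

variable {Ω : Type*} [MeasurableSpace Ω] {μ : Measure Ω}

theorem ae_eventually_notMem_of_eventually_le_ofReal {E : ℕ → Set Ω} {f : ℕ → ℝ}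
    (hf : Summable f) (hE : ∀ᶠ n in atTop, μ (E n) ≤ ENNReal.ofReal (f n)) :
    ∀ᵐ ω ∂μ, ∀ᶠ n in atTop, ω ∉ E n := by
  obtain ⟨N, hN⟩ := eventually_atTop.1 hE
  have hsum : ∑' n, μ (E (n + N)) ≠ ⊤ :=
    ne_top_of_le_ne_top
      (ENNReal.tsum_coe_ne_top_iff_summable.2 ((summable_nat_add_iff N).2 hf).toNNReal)
      (ENNReal.tsum_le_tsum fun n => hN (n + N) le_add_self)
  filter_upwards [ae_eventually_notMem hsum] with ω hω
  filter_upwards [(tendsto_sub_atTop_nat N).eventually hω, eventually_ge_atTop N] with n hn hNn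
  rwa [Nat.sub_add_cancel hNn] at hn

theorem ae_le_of_forall_lt {g : Ω → ℝ} {b : ℝ} (h : ∀ L, b < L → ∀ᵐ ω ∂μ, g ω ≤ L) :
    ∀ᵐ ω ∂μ, g ω ≤ b := by
  obtain ⟨u, -, hbu, hu⟩ := exists_seq_strictAnti_tendsto b
  filter_upwards [ae_all_iff.2 fun n => h (u n) (hbu n)] with ω hω
  exact ge_of_tendsto' hu hω

end AlmostSure

section TailExponents

variable {β θ p q : ℝ}

lemma mul_rpow_mul_rpow_rpow_div (hθq : θ * q = 1) (hβq : β * q = p) {c b ℓ : ℝ}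
    (hc : 0 ≤ c) (hb : 0 < b) (hℓ : 0 ≤ ℓ) :
    (c * b ^ β * ℓ ^ θ) ^ q / b ^ p = c ^ q * ℓ := by
  rw [mul_rpow (by positivity) (by positivity), mul_rpow hc (by positivity),
    ← rpow_mul hb.le, hβq, ← rpow_mul hℓ, hθq, rpow_one]
  field_simp

lemma one_lt_mul_rpow_of_rpow_neg_lt (hθq : θ * q = 1) (hq : 0 < q) {A c : ℝ} (hA : 0 < A)
    (hc : A ^ (-θ) < c) : 1 < A * c ^ q := by
  have h := rpow_lt_rpow (rpow_nonneg hA.le _) hc hq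
  rwa [← rpow_mul hA.le, neg_mul, hθq, rpow_neg_one, inv_lt_iff_one_lt_mul₀' hA] at h

lemma exists_lt_one_lt_mul_rpow_eq {a L : ℝ} (ha : 0 ≤ a) (hβ : 0 < β) (haL : a < L) :
    ∃ c ρ, a < c ∧ 1 < ρ ∧ c * ρ ^ β = L := by
  have hc : 0 < (a + L) / 2 := by linarith
  refine ⟨(a + L) / 2, (L / ((a + L) / 2)) ^ β⁻¹, by linarith,
    one_lt_rpow ((one_lt_div hc).2 (by linarith)) (inv_pos.2 hβ), ?_⟩
  rw [← rpow_mul (div_pos (by linarith) hc).le, inv_mul_cancel₀ hβ.ne', rpow_one,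
    mul_div_cancel₀ _ hc.ne']

theorem ae_eventually_le_geometric_of_tail {Ω : Type*} [MeasurableSpace Ω] {μ : Measure Ω}
    {Y : ℝ → Ω → ℝ} {A₇ A₈ c ρ : ℝ} (hθq : θ * q = 1) (hβq : β * q = p)
    (hc : 0 < c) (hs : 1 < A₈ * c ^ q) (hρ : 1 < ρ)
    (htail : ∀ b x : ℝ, 0 < b → 0 < x →
      μ {ω | x < Y b ω} ≤ ENNReal.ofReal (A₇ * exp (-(A₈ * x ^ q / b ^ p)))) :
    ∀ᵐ ω ∂μ, ∀ᶠ n : ℕ in atTop,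
      Y (ρ ^ (n + 1)) ω ≤ c * ρ ^ β * ((ρ ^ n) ^ β * log (log (ρ ^ n)) ^ θ) := by
  set s := A₈ * c ^ q
  have hlogρ : 0 < log ρ := log_pos hρ
  have hsum : Summable fun n : ℕ => A₇ * ((n : ℝ) * log ρ) ^ (-s) := by
    refine (((Real.summable_nat_rpow (p := -s)).2 (by linarith)).mul_right (log ρ ^ (-s))).mul_left
      A₇ |>.congr fun n => ?_
    rw [mul_rpow n.cast_nonneg hlogρ.le]
  have hmul : ∀ n : ℕ, (ρ ^ (n + 1)) ^ β = ρ ^ β * (ρ ^ n) ^ β := fun n => by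
    rw [pow_succ', mul_rpow (by positivity) (by positivity)]
  have hE : ∀ᶠ n : ℕ in atTop,
      μ {ω | c * (ρ ^ (n + 1)) ^ β * log (log (ρ ^ n)) ^ θ < Y (ρ ^ (n + 1)) ω}
        ≤ ENNReal.ofReal (A₇ * ((n : ℝ) * log ρ) ^ (-s)) := by
    filter_upwards [(tendsto_pow_atTop_atTop_of_one_lt hρ).eventually_gt_atTop (exp 1)]
      with n hn
    have hρn : 0 < ρ ^ n := by positivity
    have hlog : 1 < log (ρ ^ n) := by rwa [lt_log_iff_exp_lt hρn]
    have hloglog : 0 < log (log (ρ ^ n)) := log_pos hlog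
    have hb : 0 < ρ ^ (n + 1) := by positivity
    calc μ {ω | c * (ρ ^ (n + 1)) ^ β * log (log (ρ ^ n)) ^ θ < Y (ρ ^ (n + 1)) ω}
        ≤ ENNReal.ofReal (A₇ * exp (-(A₈ * (c * (ρ ^ (n + 1)) ^ β * log (log (ρ ^ n)) ^ θ) ^ q
            / (ρ ^ (n + 1)) ^ p))) := htail _ _ hb (by positivity)
      _ = ENNReal.ofReal (A₇ * ((n : ℝ) * log ρ) ^ (-s)) := by
        rw [mul_div_assoc, mul_rpow_mul_rpow_rpow_div hθq hβq hc.le hb hloglog.le, ← log_pow,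
          rpow_def_of_pos (one_pos.trans hlog), ← mul_assoc, mul_neg, mul_comm (log _)]
  filter_upwards [ae_eventually_notMem_of_eventually_le_ofReal hsum hE] with ω hω
  filter_upwards [hω] with n hn
  simpa only [Set.mem_ofPred_eq, not_lt, hmul, mul_assoc] using hn

end TailExponents

theorem stmt_13_general {Ω : Type*} [MeasurableSpace Ω] (μ : Measure Ω) [IsProbabilityMeasure μ]
    (α H A₇ A₈ : ℝ) (hα : α ∈ Set.Ioc (1:ℝ) 2) (hH : H ∈ Set.Ioo (0:ℝ) 1)
    (hA₈ : 0 < A₈)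
    (X : ℝ → Ω → ℝ)
    (hcont : ∀ ω, ContinuousOn (fun t => X t ω) (Set.Ici 0))
    (hzero : ∀ ω, X 0 ω = 0)
    (htail : ∀ a b x : ℝ, 0 ≤ a → a < b → 0 < x →
      μ {ω | x < ⨆ t : Set.Icc a b, |X t ω - X a ω|}
        ≤ ENNReal.ofReal (A₇ * Real.exp (-(A₈ * x ^ (2 * α / (α + 2 * H))
            / (b - a) ^ (2 * H * (α - 1) / (α + 2 * H)))))) :
    ∀ᵐ ω ∂μ,
      Filter.limsup
        (fun t : ℝ => (⨆ s : Set.Icc 0 t, |X s ω|)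
          / (t ^ (H * (α - 1) / α) * (Real.log (Real.log t)) ^ ((α + 2 * H) / (2 * α))))
        atTop
      ≤ A₈ ^ (-((α + 2 * H) / (2 * α))) := by
  obtain ⟨hα1, -⟩ := hα
  obtain ⟨hH0, -⟩ := hH
  have hθq : (α + 2 * H) / (2 * α) * (2 * α / (α + 2 * H)) = 1 := by field_simp
  have hβq : H * (α - 1) / α * (2 * α / (α + 2 * H)) = 2 * H * (α - 1) / (α + 2 * H) := by
    field_simp
  have hβ : 0 < H * (α - 1) / α := div_pos (mul_pos hH0 (by linarith)) (by linarith)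
  have htail₀ : ∀ b x : ℝ, 0 < b → 0 < x → μ {ω | x < ⨆ t : Set.Icc 0 b, |X t ω|}
      ≤ ENNReal.ofReal (A₇ * exp (-(A₈ * x ^ (2 * α / (α + 2 * H))
          / b ^ (2 * H * (α - 1) / (α + 2 * H))))) := fun b x hb hx => by
    simpa only [hzero, sub_zero] using htail 0 b x le_rfl hb hx
  refine ae_le_of_forall_lt fun L hL => ?_
  obtain ⟨c, ρ, hc, hρ, rfl⟩ := exists_lt_one_lt_mul_rpow_eq (rpow_pos_of_pos hA₈ _).le hβ hL
  filter_upwards [ae_eventually_le_geometric_of_tail hθq hβq ((rpow_pos_of_pos hA₈ _).trans hc)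
    (one_lt_mul_rpow_of_rpow_neg_lt hθq (by positivity) hA₈ hc) hρ htail₀] with ω hω
  exact limsup_div_le_of_le_geometric hρ (monotoneOn_iSup_abs_Icc (hcont ω))
    (fun t => Real.iSup_nonneg fun _ => abs_nonneg _)
    (monotoneOn_rpow_mul_log_log_rpow hβ.le (by positivity))
    (fun _ => rpow_mul_log_log_rpow_pos) hω

theorem stmt_13 {Ω : Type*} [MeasurableSpace Ω] (μ : Measure Ω) [IsProbabilityMeasure μ]
    (α H A₇ A₈ : ℝ) (hα : α ∈ Set.Ioc (1:ℝ) 2) (hH : H ∈ Set.Ioo (0:ℝ) 1)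
    (hA₇ : 0 < A₇) (hA₈ : 0 < A₈)
    (X : ℝ → Ω → ℝ)
    (hcont : ∀ ω, ContinuousOn (fun t => X t ω) (Set.Ici 0))
    (hzero : ∀ ω, X 0 ω = 0)
    (htail : ∀ a b x : ℝ, 0 ≤ a → a < b → 0 < x →
      μ {ω | x < ⨆ t : Set.Icc a b, |X t ω - X a ω|}
        ≤ ENNReal.ofReal (A₇ * Real.exp (-(A₈ * x ^ (2 * α / (α + 2 * H))
            / (b - a) ^ (2 * H * (α - 1) / (α + 2 * H)))))) :
    ∀ᵐ ω ∂μ,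
      Filter.limsup
        (fun t : ℝ => (⨆ s : Set.Icc 0 t, |X s ω|)
          / (t ^ (H * (α - 1) / α) * (Real.log (Real.log t)) ^ ((α + 2 * H) / (2 * α))))
        atTop
      ≤ A₈ ^ (-((α + 2 * H) / (2 * α))) :=
  stmt_13_general μ α H A₇ A₈ hα hH hA₈ X hcont hzero htail
end
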